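/- Assume b_u ≥ 1 for every u ∈ V, let ε > 0 and 0 < α ≤ 1, and let (Y_u)_{u∈V} be independent random variables each distributed as Lap(1/ε). Then the expected cost of the Laplace-with-margin solution satisfies E[ Σ_{v∈M} ( Σ_{u∈L_v}(b_u + Y_u) + (2/ε)·√(|L_v|)·ln(2n/α) )·f_v + Σ_{u∈V} b_u·d(u,h(u)) ] ≤ (1 + (2/ε)·ln(2n/α))·OPT. -/

import Mathlib

open MeasureTheory ProbabilityTheory Finset
open scoped NNReal ENNReal

/-- `Lap(s)`: the Laplace distribution on `ℝ` with scale `s`, given by the density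
`x ↦ (1/(2s)) · exp (-|x|/s)` with respect to Lebesgue measure. -/
noncomputable def lapMeasure (s : ℝ) : Measure ℝ :=
  volume.withDensity (fun x => ENNReal.ofReal ((1 / (2 * s)) * Real.exp (-|x| / s)))

lemma integrable_abs_mul_exp_neg {b : ℝ} (hb : 0 < b) :
    Integrable (fun x : ℝ => |x| * Real.exp (-b * |x|)) := by
  have h0 : IntegrableOn (fun x : ℝ => |x| * Real.exp (-b * |x|)) (Set.Ioi 0) := by
    have h1 := integrableOn_rpow_mul_exp_neg_mul_rpow (p := 1) (s := 1)
      (by norm_num) zero_lt_one hb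
    simp only [Real.rpow_one] at h1
    exact h1.congr_fun (fun x hx => by simp [abs_of_pos (Set.mem_Ioi.mp hx)]) measurableSet_Ioi
  rw [← integrableOn_univ, ← Set.Iio_union_Ici (a := (0:ℝ)), integrableOn_union,
    integrableOn_Ici_iff_integrableOn_Ioi]
  refine ⟨?_, h0⟩
  rw [← (Measure.measurePreserving_neg (volume : Measure ℝ)).integrableOn_comp_preimage
      (Homeomorph.neg ℝ).measurableEmbedding]
  simp only [Function.comp_def, abs_neg, Set.neg_preimage, Set.neg_Iio, neg_neg, neg_zero]
  exact h0

lemma lapDens_meas (s : ℝ) :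
    Measurable (fun x : ℝ => ((1 / (2 * s)) * Real.exp (-|x| / s)).toNNReal) :=
  (measurable_const.mul ((measurable_abs.neg.div_const s).exp)).real_toNNReal

lemma lapMeasure_eq (s : ℝ) : lapMeasure s =
    volume.withDensity
      (fun x => (((1 / (2 * s)) * Real.exp (-|x| / s)).toNNReal : ℝ≥0∞)) := rfl

lemma lap_integrable_id {s : ℝ} (hs : 0 < s) : Integrable (id : ℝ → ℝ) (lapMeasure s) := by
  rw [lapMeasure_eq, integrable_withDensity_iff_integrable_smul (lapDens_meas s)]
  have hfun : (fun x : ℝ => ((1 / (2 * s)) * Real.exp (-|x| / s)).toNNReal • (id x))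
      = fun x : ℝ => ((1 / (2 * s)) * Real.exp (-|x| / s)) * x := by
    funext x
    rw [NNReal.smul_def, Real.coe_toNNReal _ (by positivity)]
    rfl
  rw [hfun]
  have hInt : Integrable (fun x : ℝ => (1 / (2 * s)) * (|x| * Real.exp (-(1/s) * |x|))) :=
    (integrable_abs_mul_exp_neg (by positivity)).const_mul _
  apply hInt.mono'
  · exact ((measurable_const.mul ((measurable_abs.neg.div_const s).exp)).mul
      measurable_id).aestronglyMeasurable
  · filter_upwards with x
    rw [Real.norm_eq_abs, abs_mul, abs_mul, abs_of_nonneg (by positivity : (0:ℝ) ≤ 1/(2*s)),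
      abs_of_nonneg (Real.exp_pos _).le]
    exact le_of_eq (by ring_nf)

lemma lap_mean_zero (s : ℝ) : ∫ x, x ∂(lapMeasure s) = 0 := by
  rw [lapMeasure_eq, integral_withDensity_eq_integral_smul (lapDens_meas s) (fun x => x)]
  set g : ℝ → ℝ := fun x => ((1 / (2 * s)) * Real.exp (-|x| / s)).toNNReal • x with hg
  have hodd : (fun x => g (-x)) = fun x => - g x := by
    funext x; simp [hg, abs_neg, smul_neg]
  have h1 : ∫ x, g x ∂(volume : Measure ℝ) = - ∫ x, g x ∂(volume : Measure ℝ) := by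
    conv_lhs => rw [← integral_neg_eq_self g (volume : Measure ℝ)]
    rw [show (fun x => g (-x)) = fun x => - g x from hodd, integral_neg]
  linarith


/-- Expected-cost bound for the Laplace-with-margin algorithm: if `b_u ≥ 1` for all
locations and `(Y_u)` are independent `Lap(1/ε)` noises, then the expected cost of the
solution that opens each marked facility `v` with capacity
`Σ_{u ∈ L_v}(b_u + Y_u) + (2/ε)·√|L_v|·ln(2n/α)` is at most
`(1 + (2/ε)·ln(2n/α)) · OPT`. -/
theorem laplace_margin_expected_cost
    {V : Type*} [Fintype V] [DecidableEq V] [MetricSpace V]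
    (n : ℕ) (hn : Fintype.card V = n)
    (f : V → ℝ) (hf : ∀ v, 0 ≤ f v)
    (b : V → ℕ) (hb : ∀ u, 1 ≤ b u)
    (h : V → V)
    (hopt : ∀ u x : V, f (h u) + dist u (h u) ≤ f x + dist u x)
    (hidem : ∀ u, h (h u) = h u)
    (ε α : ℝ) (hε : 0 < ε) (hα : 0 < α) (hα1 : α ≤ 1)
    {Ω : Type*} [MeasurableSpace Ω] (P : Measure Ω) [IsProbabilityMeasure P]
    (Y : V → Ω → ℝ) (hmeas : ∀ u, Measurable (Y u))
    (hindep : iIndepFun Y P)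
    (hdist : ∀ u, Measure.map (Y u) P = lapMeasure (1 / ε)) :
    (∫ ω, (∑ v ∈ univ.filter (fun v => h v = v),
        ((∑ u ∈ univ.filter (fun u => h u = v), ((b u : ℝ) + Y u ω)) +
          (2 / ε) * Real.sqrt ((univ.filter (fun u => h u = v)).card) *
            Real.log (2 * n / α)) * f v
      + ∑ u, (b u : ℝ) * dist u (h u)) ∂P)
      ≤ (1 + (2 / ε) * Real.log (2 * n / α)) *
          ∑ u, (b u : ℝ) * (f (h u) + dist u (h u)) := by
  classical
  -- trivial case: empty space
  by_cases hne : Nonempty V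
  swap
  · rw [not_nonempty_iff] at hne
    simp [Finset.univ_eq_empty]
  -- integrability and zero mean of the noises
  have hYint : ∀ u, Integrable (Y u) P := by
    intro u
    have h1 : Integrable (id : ℝ → ℝ) (Measure.map (Y u) P) := by
      rw [hdist u]; exact lap_integrable_id (by positivity)
    rw [integrable_map_measure aestronglyMeasurable_id (hmeas u).aemeasurable] at h1
    exact h1
  have hYmean : ∀ u, ∫ ω, Y u ω ∂P = 0 := by
    intro u
    have h1 : ∫ x, (id x : ℝ) ∂(Measure.map (Y u) P) = ∫ ω, Y u ω ∂P :=
      integral_map (hmeas u).aemeasurable aestronglyMeasurable_id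
    rw [← h1, hdist u]
    exact lap_mean_zero (1/ε)
  -- abbreviations
  set M : Finset V := univ.filter (fun v => h v = v) with hM
  have hInner : ∀ v : V, Integrable
      (fun ω => (∑ u ∈ univ.filter (fun u => h u = v), ((b u : ℝ) + Y u ω))) P := by
    intro v
    exact integrable_finset_sum _ (fun u _ => (integrable_const _).add (hYint u))
  have hTerm : ∀ v : V, Integrable (fun ω =>
      ((∑ u ∈ univ.filter (fun u => h u = v), ((b u : ℝ) + Y u ω)) +
        (2 / ε) * Real.sqrt ((univ.filter (fun u => h u = v)).card) *
          Real.log (2 * n / α)) * f v) P := by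
    intro v
    exact ((hInner v).add (integrable_const _)).mul_const _
  -- compute the integral
  have hIntEq : (∫ ω, (∑ v ∈ M,
        ((∑ u ∈ univ.filter (fun u => h u = v), ((b u : ℝ) + Y u ω)) +
          (2 / ε) * Real.sqrt ((univ.filter (fun u => h u = v)).card) *
            Real.log (2 * n / α)) * f v
      + ∑ u, (b u : ℝ) * dist u (h u)) ∂P)
      = (∑ v ∈ M,
        ((∑ u ∈ univ.filter (fun u => h u = v), (b u : ℝ)) +
          (2 / ε) * Real.sqrt ((univ.filter (fun u => h u = v)).card) *
            Real.log (2 * n / α)) * f v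
      + ∑ u, (b u : ℝ) * dist u (h u)) := by
    rw [integral_add (integrable_finset_sum _ (fun v _ => hTerm v)) (integrable_const _),
      integral_finset_sum _ (fun v _ => hTerm v), integral_const]
    simp only [probReal_univ, one_smul]
    congr 1
    apply Finset.sum_congr rfl
    intro v _
    rw [integral_mul_const, integral_add (hInner v) (integrable_const _),
      integral_finset_sum (f := fun u ω => ((b u : ℝ) + Y u ω)) _
        (fun u _ => (integrable_const _).add (hYint u)),
      integral_const]
    simp only [probReal_univ, one_smul]
    congr 2
    apply Finset.sum_congr rfl
    intro u _
    rw [integral_add (integrable_const _) (hYint u), integral_const, hYmean u]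
    simp [measure_univ]
  rw [hIntEq]
  -- now the deterministic estimate
  have hn1 : 1 ≤ n := by
    rw [← hn]; exact Fintype.card_pos
  have hlog : 0 ≤ Real.log (2 * n / α) := by
    apply Real.log_nonneg
    rw [le_div_iff₀ hα]
    have : (1:ℝ) ≤ (n:ℝ) := by exact_mod_cast hn1
    nlinarith
  set c : ℝ := (2 / ε) * Real.log (2 * n / α) with hc
  have hc0 : 0 ≤ c := by
    apply mul_nonneg (by positivity) hlog
  have hMmem : ∀ u : V, h u ∈ M := fun u => mem_filter.2 ⟨mem_univ _, hidem u⟩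
  have hfiber : ∀ g : V → ℝ,
      ∑ v ∈ M, ∑ u ∈ univ.filter (fun u => h u = v), g u = ∑ u, g u := by
    intro g
    exact Finset.sum_fiberwise_of_maps_to (fun u _ => hMmem u) g
  have hS1 : ∑ v ∈ M, (∑ u ∈ univ.filter (fun u => h u = v), (b u : ℝ)) * f v
      = ∑ u, (b u : ℝ) * f (h u) := by
    rw [← hfiber (fun u => (b u : ℝ) * f (h u))]
    apply Finset.sum_congr rfl
    intro v _
    rw [Finset.sum_mul]
    apply Finset.sum_congr rfl
    intro u hu
    rw [(mem_filter.1 hu).2]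
  have hsqrt : ∀ v : V, Real.sqrt ((univ.filter (fun u => h u = v)).card)
      ≤ ∑ u ∈ univ.filter (fun u => h u = v), (b u : ℝ) := by
    intro v
    set k : ℕ := (univ.filter (fun u => h u = v)).card with hk
    have h1 : Real.sqrt k ≤ (k : ℝ) := by
      rcases Nat.eq_zero_or_pos k with h0 | h0
      · simp [h0]
      · have hk1 : (1:ℝ) ≤ (k:ℝ) := by exact_mod_cast h0
        have := Real.sqrt_le_sqrt (show (k:ℝ) ≤ (k:ℝ)^2 by nlinarith)
        rwa [Real.sqrt_sq (by positivity)] at this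
    refine h1.trans ?_
    have : (k : ℝ) = ∑ u ∈ univ.filter (fun u => h u = v), (1 : ℝ) := by
      simp [hk]
    rw [this]
    apply Finset.sum_le_sum
    intro u _
    exact_mod_cast hb u
  -- assemble
  have hA : ∑ v ∈ M, ((2 / ε) * Real.sqrt ((univ.filter (fun u => h u = v)).card) *
        Real.log (2 * n / α)) * f v ≤ c * ∑ u, (b u : ℝ) * f (h u) := by
    rw [← hS1, Finset.mul_sum]
    apply Finset.sum_le_sum
    intro v _
    have heq : (2 / ε) * Real.sqrt ((univ.filter (fun u => h u = v)).card) *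
        Real.log (2 * n / α) * f v
        = c * (Real.sqrt ((univ.filter (fun u => h u = v)).card) * f v) := by
      rw [hc]; ring
    rw [heq]
    apply mul_le_mul_of_nonneg_left _ hc0
    exact mul_le_mul_of_nonneg_right (hsqrt v) (hf v)
  have hB : ∑ u, (b u : ℝ) * f (h u) ≤ ∑ u, (b u : ℝ) * (f (h u) + dist u (h u)) := by
    apply Finset.sum_le_sum
    intro u _
    have : (0:ℝ) ≤ (b u : ℝ) := by positivity
    nlinarith [dist_nonneg (x := u) (y := h u)]
  have hsplit : ∑ v ∈ M,
      ((∑ u ∈ univ.filter (fun u => h u = v), (b u : ℝ)) +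
        (2 / ε) * Real.sqrt ((univ.filter (fun u => h u = v)).card) *
          Real.log (2 * n / α)) * f v
      = ∑ u, (b u : ℝ) * f (h u) +
        ∑ v ∈ M, ((2 / ε) * Real.sqrt ((univ.filter (fun u => h u = v)).card) *
          Real.log (2 * n / α)) * f v := by
    rw [← hS1, ← Finset.sum_add_distrib]
    apply Finset.sum_congr rfl
    intro v _
    ring
  rw [hsplit]
  have hOPT : ∑ u, (b u : ℝ) * (f (h u) + dist u (h u))
      = ∑ u, (b u : ℝ) * f (h u) + ∑ u, (b u : ℝ) * dist u (h u) := by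
    rw [← Finset.sum_add_distrib]
    apply Finset.sum_congr rfl
    intro u _
    ring
  have hCB : c * (∑ u, (b u : ℝ) * f (h u)) ≤
      c * ∑ u, (b u : ℝ) * (f (h u) + dist u (h u)) :=
    mul_le_mul_of_nonneg_left hB hc0
  rw [one_add_mul]
  rw [hOPT] at *
  linarith
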